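/- Discretization-step rule for the planar arm: let δ > 0 and θ > 0 satisfy θ · ∑_{k=1}^{n} ∑_{i=k}^{n} l_i < δ. Then for all configurations q, q' ∈ ℝⁿ with |q_k − q'_k| ≤ θ for every k, the end-effector displacement satisfies ‖p_n(q) − p_n(q')‖ < δ. Hence choosing the angular grid resolution θ below δ / ( ∑_{k=1}^{n} ∑_{i=k}^{n} l_i ) guarantees that moving between adjacent grid configurations displaces the tip by less than the minimum obstacle size or passage width δ. -/

import Mathlib

/-- The unit vector in the plane at angle `α`. -/
noncomputable def unitVec (α : ℝ) : EuclideanSpace ℝ (Fin 2) :=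
  WithLp.toLp 2 ![Real.cos α, Real.sin α]

/-- Cumulative angle of link `i` (0-indexed): `φ i = q 0 + ⋯ + q i`. -/
noncomputable def cumAngle {n : ℕ} (q : Fin n → ℝ) (i : Fin n) : ℝ :=
  ∑ k ∈ Finset.Iic i, q k

/-- Position of joint `j` (`j = 0, …, n`, 0-indexed): `p j = ∑_{i < j} l i • unitVec (φ i)`,
with the base `p 0 = (0,0)` fixed at the origin. -/
noncomputable def jointPos {n : ℕ} (l : Fin n → ℝ) (q : Fin n → ℝ) (j : ℕ) :
    EuclideanSpace ℝ (Fin 2) :=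
  ∑ i ∈ Finset.univ.filter (fun i : Fin n => (i : ℕ) < j), l i • unitVec (cumAngle q i)

/-- Body of link `j` (0-indexed): the closed segment from joint `j` to joint `j+1`. -/
noncomputable def linkBody {n : ℕ} (l : Fin n → ℝ) (q : Fin n → ℝ) (j : Fin n) :
    Set (EuclideanSpace ℝ (Fin 2)) :=
  segment ℝ (jointPos l q j) (jointPos l q (j + 1))

/-!
The map `α ↦ unitVec α` is 1-Lipschitz, since
`‖unitVec a - unitVec b‖² = 2 - 2 cos (a - b) ≤ (a - b)²`, and the cumulative angle `φ_i` moves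
by at most `(i + 1) θ`. Hence the tip moves by at most `∑_i l_i ∑_{k ≤ i} θ`, which is
`θ ∑_k ∑_{i ≥ k} l_i` after exchanging the order of summation.
-/

open Finset Real

lemma norm_unitVec_sub_unitVec_le (a b : ℝ) : ‖unitVec a - unitVec b‖ ≤ |a - b| := by
  have hsq : ‖unitVec a - unitVec b‖ ^ 2 = 2 - 2 * cos (a - b) := by
    rw [EuclideanSpace.norm_sq_eq, Fin.sum_univ_two, cos_sub]
    simp only [unitVec, WithLp.ofLp_sub, Pi.sub_apply, Matrix.cons_val_zero, Matrix.cons_val_one,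
      Real.norm_eq_abs, sq_abs]
    nlinarith [sin_sq_add_cos_sq a, sin_sq_add_cos_sq b]
  have hcos := one_sub_sq_div_two_le_cos (x := a - b)
  exact pow_le_pow_iff_left₀ (norm_nonneg _) (abs_nonneg _) two_ne_zero |>.mp
    (by rw [hsq, sq_abs]; linarith)

lemma abs_cumAngle_sub_le {n : ℕ} {θ : ℝ} {q q' : Fin n → ℝ} (hq : ∀ k, |q k - q' k| ≤ θ)
    (i : Fin n) : |cumAngle q i - cumAngle q' i| ≤ ∑ _k ∈ Iic i, θ := by
  rw [cumAngle, cumAngle, ← sum_sub_distrib]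
  exact (abs_sum_le_sum_abs _ _).trans (sum_le_sum fun k _ => hq k)

lemma jointPos_self {n : ℕ} (l q : Fin n → ℝ) :
    jointPos l q n = ∑ i, l i • unitVec (cumAngle q i) := by
  rw [jointPos, filter_true_of_mem fun i _ => i.is_lt]

lemma sum_sum_Iic_eq_sum_sum_Ici {α M : Type*} [Fintype α] [LinearOrder α] [LocallyFiniteOrderBot α]
    [LocallyFiniteOrderTop α] [AddCommMonoid M] (f : α → M) :
    ∑ i, ∑ _k ∈ Iic i, f i = ∑ k, ∑ i ∈ Ici k, f i :=
  sum_comm' fun _ _ => by simp only [mem_Iic, mem_Ici, mem_univ, and_true, true_and]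

lemma norm_tip_sub_le {n : ℕ} {l : Fin n → ℝ} (hl : ∀ i, 0 ≤ l i) {θ : ℝ}
    {q q' : Fin n → ℝ} (hq : ∀ k, |q k - q' k| ≤ θ) :
    ‖jointPos l q n - jointPos l q' n‖ ≤ θ * ∑ k, ∑ i ∈ Ici k, l i :=
  calc ‖jointPos l q n - jointPos l q' n‖
      = ‖∑ i, l i • (unitVec (cumAngle q i) - unitVec (cumAngle q' i))‖ := by
        simp only [jointPos_self, smul_sub, sum_sub_distrib]
    _ ≤ ∑ i, l i * ∑ _k ∈ Iic i, θ := by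
        refine (norm_sum_le _ _).trans (sum_le_sum fun i _ => ?_)
        rw [norm_smul, norm_of_nonneg (hl i)]
        exact mul_le_mul_of_nonneg_left
          ((norm_unitVec_sub_unitVec_le _ _).trans (abs_cumAngle_sub_le hq i)) (hl i)
    _ = θ * ∑ k, ∑ i ∈ Ici k, l i := by
        simp only [← sum_sum_Iic_eq_sum_sum_Ici, mul_sum, mul_comm]

theorem stmt_8_general {n : ℕ} (l : Fin n → ℝ) (hl : ∀ i, 0 < l i)
    (δ θ : ℝ)
    (hres : θ * ∑ k : Fin n, ∑ i ∈ Finset.Ici k, l i < δ) :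
    ∀ q q' : Fin n → ℝ, (∀ k : Fin n, |q k - q' k| ≤ θ) →
      ‖jointPos l q n - jointPos l q' n‖ < δ :=
  fun _ _ hq => (norm_tip_sub_le (fun i => (hl i).le) hq).trans_lt hres

/-- Discretization-step rule for the planar arm: if the angular grid
resolution `θ` satisfies `θ * ∑ k ∑_{i ≥ k} l i < δ`, then any two configurations whose
joint values differ by at most `θ` in each coordinate displace the end-effector tip by
less than `δ`. -/
theorem stmt_8 {n : ℕ} (l : Fin n → ℝ) (hl : ∀ i, 0 < l i)
    (δ θ : ℝ) (hδ : 0 < δ) (hθ : 0 < θ)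
    (hres : θ * ∑ k : Fin n, ∑ i ∈ Finset.Ici k, l i < δ) :
    ∀ q q' : Fin n → ℝ, (∀ k : Fin n, |q k - q' k| ≤ θ) →
      ‖jointPos l q n - jointPos l q' n‖ < δ :=
  stmt_8_general l hl δ θ hres
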